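/- arXiv:1707.09277 — 4 statements merged into one kernel-verified Lean document; each statement's English description precedes it below -/
import Mathlib

section
/- Let d ≥ 1, ϑ ∈ (0, π/2], α ∈ (0,2), Λ ≥ 1, let Γ be a ϑ-admissible configuration and let k : ℝ^d × ℝ^d → [0,∞] be measurable, symmetric, and satisfy condition (A). Then there exist a constant C = C(d,ϑ) > 0, an angle ϑ' ∈ (0, π/2] depending only on d and ϑ (not otherwise on Γ), and a ϑ'-bounded configuration Γ' such that for all x, y ∈ ℤ^d with |x − y| > √d: C Λ^{−1} (𝟙_{V^{Γ'}[x]}(y) + 𝟙_{V^{Γ'}[y]}(x)) |x−y|^{−d−α} ≤ ω^k_1(x,y), where ω^k_1(x,y) = ∫_{A_1(x) × A_1(y)} k(s,t) ds dt. -/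
open MeasureTheory Metric
open scoped ENNReal

noncomputable section

/-- `d`-dimensional Euclidean space. -/
abbrev Euc (d : ℕ) : Type := EuclideanSpace ℝ (Fin d)

/-- The open cone `Ṽ(v,θ)` with axis `v` and apex angle `θ`. -/
def coneSet (d : ℕ) (v : Euc d) (θ : ℝ) : Set (Euc d) :=
  {h | h ≠ 0 ∧ Real.cos θ < (inner ℝ v h : ℝ) / ‖h‖}

/-- The double cone `V(v,θ) = Ṽ(v,θ) ∪ (−Ṽ(v,θ))`. -/
def doubleCone (d : ℕ) (v : Euc d) (θ : ℝ) : Set (Euc d) :=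
  {h | h ∈ coneSet d v θ ∨ -h ∈ coneSet d v θ}

/-- A configuration assigns to each point of `ℝ^d` a double cone with apex at `0`,
recorded via its (unit) symmetry axis and its apex angle in `(0, π/2]`. -/
structure Config (d : ℕ) where
  axis : Euc d → Euc d
  angle : Euc d → ℝ
  axis_norm : ∀ x, ‖axis x‖ = 1
  angle_mem : ∀ x, angle x ∈ Set.Ioc 0 (Real.pi / 2)

/-- The double cone `Γ(x)` assigned to `x` by a configuration `Γ`. -/
def Config.cone {d : ℕ} (Γ : Config d) (x : Euc d) : Set (Euc d) :=
  doubleCone d (Γ.axis x) (Γ.angle x)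

/-- `Γ` is `ϑ`-bounded: every apex angle is at least `ϑ`. -/
def Config.Bounded {d : ℕ} (Γ : Config d) (ϑ : ℝ) : Prop :=
  ∀ x, ϑ ≤ Γ.angle x

/-- `Γ` is `ϑ`-admissible: `ϑ`-bounded and `{(x,y) | y - x ∈ Γ(x)}` is Borel. -/
def Config.Admissible {d : ℕ} (Γ : Config d) (ϑ : ℝ) : Prop :=
  Γ.Bounded ϑ ∧ MeasurableSet {p : Euc d × Euc d | p.2 - p.1 ∈ Γ.cone p.1}

/-- The indicator sum `𝟙_{V^Γ[x]}(y) + 𝟙_{V^Γ[y]}(x)`, valued in `ℝ≥0∞`. -/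
def indSum {d : ℕ} (Γ : Config d) (x y : Euc d) : ℝ≥0∞ :=
  (Γ.cone x).indicator (fun _ => (1 : ℝ≥0∞)) (y - x) +
  (Γ.cone y).indicator (fun _ => (1 : ℝ≥0∞)) (x - y)

/-- The kernel `|x - y| ^ (-d-α)` as an `ℝ≥0∞`-valued function (equal to `∞` on the diagonal). -/
def stbl (d : ℕ) (α : ℝ) (x y : Euc d) : ℝ≥0∞ :=
  (ENNReal.ofReal (dist x y)) ^ (-(d : ℝ) - α)

/-- The embedding of the integer lattice `ℤ^d` into `ℝ^d`. -/
def latt (d : ℕ) (z : Fin d → ℤ) : Euc d :=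
  (WithLp.equiv 2 (Fin d → ℝ)).symm (fun i => (z i : ℝ))

/-- The open cube `A_h(u)` of side length `h` centered at `u` (w.r.t. the max norm). -/
def cube (d : ℕ) (h : ℝ) (u : Euc d) : Set (Euc d) :=
  {x | ∀ i, |x i - u i| < h / 2}

/-- The translate `V[x] = V + x` of a set `V`. -/
def shiftSet (d : ℕ) (V : Set (Euc d)) (x : Euc d) : Set (Euc d) :=
  {y | y - x ∈ V}

/-- The "half-set" `V_r = {y ∈ V | closedBall y r ⊆ V}` (double half-cone for `V` a double cone). -/
def halfSet (d : ℕ) (V : Set (Euc d)) (r : ℝ) : Set (Euc d) :=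
  {y | y ∈ V ∧ Metric.closedBall y r ⊆ V}

/-- Adjacency of `w` and `z` in the (undirected) graph `G_U(Γ)`. -/
def adjIn (d : ℕ) (Γ : Config d) (U : Set (Euc d)) (w z : Euc d) : Prop :=
  (w ∈ U ∧ z - w ∈ Γ.cone w) ∨ (z ∈ U ∧ w - z ∈ Γ.cone z)

/-- Adjacency of two lattice points in the graph `G(Γ)`. -/
def adjL (d : ℕ) (Γ : Config d) (w z : Fin d → ℤ) : Prop :=
  latt d z - latt d w ∈ Γ.cone (latt d w) ∨ latt d w - latt d z ∈ Γ.cone (latt d z)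

/-- A lattice point `x` is `r`-`R`-connected if every lattice point within distance `r`
is connected to `x` by an undirected edge path in `G(Γ)` staying in the closed `R`-ball
around `x`. -/
def rRConnected (d : ℕ) (Γ : Config d) (r R : ℝ) (x : Fin d → ℤ) : Prop :=
  ∀ y : Fin d → ℤ, dist (latt d y) (latt d x) ≤ r →
    ∃ (N : ℕ) (p : ℕ → Fin d → ℤ), p 0 = x ∧ p N = y ∧
      (∀ i < N, adjL d Γ (p i) (p (i + 1))) ∧
      ∀ i ≤ N, dist (latt d (p i)) (latt d x) ≤ R

/-- Sum over pairs of lattice points satisfying a predicate `P` of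
`(f x - f y)² K x y`, valued in `ℝ≥0∞`. -/
def dSum (d : ℕ) (f : (Fin d → ℤ) → ℝ) (K : (Fin d → ℤ) → (Fin d → ℤ) → ℝ≥0∞)
    (P : (Fin d → ℤ) → (Fin d → ℤ) → Prop) : ℝ≥0∞ :=
  ∑' q : (Fin d → ℤ) × (Fin d → ℤ),
    Set.indicator {q : (Fin d → ℤ) × (Fin d → ℤ) | P q.1 q.2}
      (fun q => ENNReal.ofReal ((f q.1 - f q.2) ^ 2) * K q.1 q.2) q

/-!
Cover the unit sphere by finitely many `δ`-balls with centres in `W`, where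
`δ = (cos (ϑ/2) - cos ϑ) / 4`. In every unit cube `A_1(z)` some `w ∈ W` lies within `δ` of the
axis `Γ.axis s` for a set of `s` of measure at least `1 / #W`; `Γ'` takes this `w` as its axis
at `z` and `ϑ/2` as its apex angle. If `y - x ∈ Γ'(x)` and `|x - y| ≥ √d`, then for each such `s`
a whole cube of side `δ` of points `t ∈ A_1(y)` close to `s + (y - x)` has `t - s ∈ Γ(s)`:
tilting the axis by `δ` and moving the tip of a vector of the `ϑ/2`-cone by `δ |y - x|` keeps it
in the `ϑ`-cone. Hence condition (A) gives `k(s,t) ≥ Λ⁻¹ |s - t|^(-d-α)` on a subset of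
`A_1(x) × A_1(y)` of measure at least `δ^d / #W`, and `|s - t| ≤ 2 |x - y|` there.
-/

open Real

lemma cube_eq_preimage (d : ℕ) (h : ℝ) (u : Euc d) :
    cube d h u = (MeasurableEquiv.toLp 2 (Fin d → ℝ)).symm ⁻¹'
      Set.univ.pi fun i => Set.Ioo (u i - h / 2) (u i + h / 2) := by
  ext t
  simp only [cube, abs_lt, Set.mem_preimage, Set.mem_pi, Set.mem_univ,
    Set.mem_Ioo, forall_const]
  refine forall_congr' fun i => ?_
  simp only [MeasurableEquiv.toLp_symm_apply]
  constructor <;> rintro ⟨h1, h2⟩ <;> constructor <;> linarith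

lemma measurableSet_cube (d : ℕ) (h : ℝ) (u : Euc d) : MeasurableSet (cube d h u) := by
  rw [cube_eq_preimage]
  exact (MeasurableEquiv.toLp 2 _).symm.measurable (.univ_pi fun _ => measurableSet_Ioo)

lemma volume_cube (d : ℕ) (h : ℝ) (u : Euc d) : volume (cube d h u) = ENNReal.ofReal h ^ d := by
  rw [cube_eq_preimage,
    (EuclideanSpace.volume_preserving_symm_measurableEquiv_toLp (Fin d)).measure_preimage
      (MeasurableSet.univ_pi fun _ => measurableSet_Ioo).nullMeasurableSet, volume_pi_pi]
  simp

lemma norm_le_sqrt_mul_of_forall_abs_le {d : ℕ} {v : Euc d} {r : ℝ} (hv : ∀ i, |v i| ≤ r) :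
    ‖v‖ ≤ √d * r := by
  rcases Nat.eq_zero_or_pos d with rfl | hd
  · simp [Subsingleton.elim v 0]
  have hr : 0 ≤ r := (abs_nonneg _).trans (hv ⟨0, hd⟩)
  rw [EuclideanSpace.norm_eq, ← Real.sqrt_sq hr, ← Real.sqrt_mul d.cast_nonneg]
  gcongr
  calc ∑ i, ‖v i‖ ^ 2 ≤ ∑ _i : Fin d, r ^ 2 := Finset.sum_le_sum fun i _ => by
        rw [Real.norm_eq_abs]; exact pow_le_pow_left₀ (abs_nonneg _) (hv i) 2
    _ = d * r ^ 2 := by simp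

lemma norm_sub_le_of_mem_cube {d : ℕ} {h : ℝ} {t u : Euc d} (ht : t ∈ cube d h u) :
    ‖t - u‖ ≤ √d * (h / 2) :=
  norm_le_sqrt_mul_of_forall_abs_le fun i => by simpa using (ht i).le

lemma exists_cube_subset_inter_cube {d : ℕ} {h ℓ : ℝ} {u Y : Euc d} (hu : u ∈ cube d h Y)
    (hℓ : ℓ ≤ h / 2) : ∃ c, cube d ℓ c ⊆ cube d h Y ∩ cube d (2 * ℓ) u := by
  refine ⟨WithLp.toLp 2 fun i => if Y i ≤ u i then u i - ℓ / 2 else u i + ℓ / 2,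
    fun t ht => ⟨fun i => ?_, fun i => ?_⟩⟩ <;>
  · have hti := ht i
    have hui := hu i
    simp only at hti
    split_ifs at hti <;> rw [abs_lt] at * <;> constructor <;> linarith [hti.1, hti.2, hui.1, hui.2]

section ConeGeometry

variable {d : ℕ}

/-- Tilting the axis by `δ` and moving the tip by `δ ‖h‖` each cost `δ ‖h‖` in `⟪v, h + e⟫`,
while `‖h + e‖ ≤ (1 + δ) ‖h‖` costs at most one more `δ ‖h‖`. -/
lemma add_mem_coneSet {v w h e : Euc d} {θ θ' δ : ℝ} (hθ : 0 ≤ cos θ) (hv : ‖v‖ = 1)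
    (hvw : ‖v - w‖ ≤ δ) (he : ‖e‖ ≤ δ * ‖h‖) (hh : h ∈ coneSet d w θ')
    (hδ : cos θ + 4 * δ ≤ cos θ') : h + e ∈ coneSet d v θ := by
  obtain ⟨hh0, hwh⟩ := hh
  have hpos : 0 < ‖h‖ := norm_pos_iff.2 hh0
  rw [lt_div_iff₀ hpos] at hwh
  have hvwh : -(δ * ‖h‖) ≤ inner ℝ (v - w) h := by
    have := neg_le_of_abs_le (abs_real_inner_le_norm (v - w) h)
    nlinarith
  have hve : -(δ * ‖h‖) ≤ inner ℝ v e := by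
    have := neg_le_of_abs_le (abs_real_inner_le_norm v e)
    rw [hv, one_mul] at this
    linarith
  have hinner : (cos θ + 2 * δ) * ‖h‖ < inner ℝ v (h + e) := by
    have : inner ℝ v (h + e) = inner ℝ w h + inner ℝ (v - w) h + inner ℝ v e := by
      rw [inner_add_right, inner_sub_left]; ring
    nlinarith
  have hδ0 : 0 ≤ δ := (norm_nonneg _).trans hvw
  have hnorm : cos θ * ‖h + e‖ ≤ (cos θ + δ) * ‖h‖ := by
    have := norm_add_le h e
    have := cos_le_one θ
    nlinarith [mul_nonneg hδ0 hpos.le]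
  have hne : h + e ≠ 0 := by
    rintro hzero
    rw [hzero, inner_zero_right] at hinner
    nlinarith
  refine ⟨hne, (lt_div_iff₀ (norm_pos_iff.2 hne)).2 ?_⟩
  nlinarith [mul_nonneg hδ0 hpos.le]

lemma add_mem_doubleCone {v w h e : Euc d} {θ θ' δ : ℝ} (hθ : 0 ≤ cos θ) (hv : ‖v‖ = 1)
    (hvw : ‖v - w‖ ≤ δ) (he : ‖e‖ ≤ δ * ‖h‖) (hh : h ∈ doubleCone d w θ')
    (hδ : cos θ + 4 * δ ≤ cos θ') : h + e ∈ doubleCone d v θ := by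
  rcases hh with hh | hh
  · exact .inl (add_mem_coneSet hθ hv hvw he hh hδ)
  · right
    rw [neg_add]
    exact add_mem_coneSet hθ hv hvw (by rwa [norm_neg, norm_neg]) hh hδ

lemma doubleCone_mono {v : Euc d} {ϑ θ : ℝ} (hϑ : 0 ≤ ϑ) (hθ : θ ≤ π) (h : ϑ ≤ θ) :
    doubleCone d v ϑ ⊆ doubleCone d v θ := by
  have hcos := cos_le_cos_of_nonneg_of_le_pi hϑ hθ h
  rintro x (⟨hx0, hx⟩ | ⟨hx0, hx⟩)
  exacts [.inl ⟨hx0, hcos.trans_lt hx⟩, .inr ⟨hx0, hcos.trans_lt hx⟩]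

lemma Config.doubleCone_subset_cone {Γ : Config d} {ϑ : ℝ} (hΓ : Γ.Bounded ϑ) (hϑ : 0 ≤ ϑ)
    (x : Euc d) : doubleCone d (Γ.axis x) ϑ ⊆ Γ.cone x :=
  doubleCone_mono hϑ ((Γ.angle_mem x).2.trans (by linarith [pi_pos])) (hΓ x)

lemma cos_half_sub_cos_div_four_mem {ϑ : ℝ} (hϑ : ϑ ∈ Set.Ioc 0 (π / 2)) :
    (cos (ϑ / 2) - cos ϑ) / 4 ∈ Set.Ioc 0 (1 / 2) := by
  obtain ⟨hϑ0, hϑ1⟩ := hϑ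
  have hlt := cos_lt_cos_of_nonneg_of_le_pi (by linarith) (by linarith [pi_pos])
    (by linarith : ϑ / 2 < ϑ)
  have := cos_nonneg_of_mem_Icc ⟨by linarith [pi_pos], hϑ1⟩
  have := cos_le_one (ϑ / 2)
  constructor <;> linarith

end ConeGeometry

lemma measure_mul_le_prod_of_le_measure_prodMk {α β : Type*} [MeasurableSpace α]
    [MeasurableSpace β] {μ : Measure α} {ν : Measure β} [SFinite ν] {S : Set α}
    {M : Set (α × β)} {b : ℝ≥0∞} (hM : MeasurableSet M)
    (h : ∀ s ∈ S, b ≤ ν (Prod.mk s ⁻¹' M)) : μ S * b ≤ μ.prod ν M := by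
  rw [Measure.prod_apply hM, mul_comm]
  calc b * μ S ≤ b * μ {s | b ≤ ν (Prod.mk s ⁻¹' M)} := by gcongr; exact h
    _ ≤ _ := mul_meas_ge_le_lintegral₀ (measurable_measure_prodMk_left hM).aemeasurable b

lemma exists_measure_div_card_le {ι α : Type*} [MeasurableSpace α] {μ : Measure α}
    {W : Finset ι} (hW : W.Nonempty) {s : Set α} {t : ι → Set α} (hs : s ⊆ ⋃ i ∈ W, t i) :
    ∃ i ∈ W, μ s / W.card ≤ μ (t i) := by
  refine ENNReal.exists_le_of_sum_le hW ?_
  calc ∑ _i ∈ W, μ s / W.card = μ s := by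
        rw [Finset.sum_const, nsmul_eq_mul,
          ENNReal.mul_div_cancel (by simpa using hW.ne_empty) (ENNReal.natCast_ne_top _)]
    _ ≤ μ (⋃ i ∈ W, t i) := measure_mono hs
    _ ≤ ∑ i ∈ W, μ (t i) := measure_biUnion_finset_le W t

lemma setLIntegral_prod_comm {α : Type*} [MeasureSpace α] [SFinite (volume : Measure α)]
    {k : α → α → ℝ≥0∞} (hk : ∀ x y, k x y = k y x) (A B : Set α) :
    ∫⁻ p in A ×ˢ B, k p.1 p.2 = ∫⁻ p in B ×ˢ A, k p.1 p.2 := by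
  rw [Measure.volume_eq_prod, ← Measure.prod_restrict, ← Measure.prod_restrict,
    ← lintegral_prod_swap]
  simp only [Prod.fst_swap, Prod.snd_swap, hk]

lemma exists_finset_unit_net {d : ℕ} (hd : 1 ≤ d) {δ : ℝ} (hδ : 0 < δ) :
    ∃ W : Finset (Euc d), W.Nonempty ∧ (∀ w ∈ W, ‖w‖ = 1) ∧
      ∀ v : Euc d, ‖v‖ = 1 → ∃ w ∈ W, ‖v - w‖ ≤ δ := by
  obtain ⟨t, hts, htfin, hcover⟩ :=
    finite_cover_balls_of_compact (isCompact_sphere (0 : Euc d) 1) hδ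
  have hnet : ∀ v : Euc d, ‖v‖ = 1 → ∃ w ∈ htfin.toFinset, ‖v - w‖ ≤ δ := fun v hv => by
    obtain ⟨w, hw, hvw⟩ := Set.mem_iUnion₂.1 (hcover (mem_sphere_zero_iff_norm.2 hv))
    exact ⟨w, htfin.mem_toFinset.2 hw, (mem_ball_iff_norm.1 hvw).le⟩
  refine ⟨htfin.toFinset, ?_,
    fun w hw => mem_sphere_zero_iff_norm.1 (hts (htfin.mem_toFinset.1 hw)), hnet⟩
  obtain ⟨w, hw, -⟩ := hnet (EuclideanSpace.single ⟨0, hd⟩ 1) (by simp)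
  exact ⟨w, hw⟩

lemma two_rpow_mul_stbl_le {d : ℕ} {α : ℝ} (hα : α ∈ Set.Icc 0 2) {X Y s t : Euc d}
    (h : dist s t ≤ 2 * dist X Y) : 2 ^ (-(d : ℝ) - 2) * stbl d α X Y ≤ stbl d α s t := by
  have hdα : 0 ≤ (d : ℝ) + α := by linarith [hα.1, d.cast_nonneg (α := ℝ)]
  calc 2 ^ (-(d : ℝ) - 2) * stbl d α X Y ≤ 2 ^ (-(d : ℝ) - α) * stbl d α X Y := by
        gcongr
        · norm_num
        · linarith [hα.2]
    _ = ENNReal.ofReal (2 * dist X Y) ^ (-(d : ℝ) - α) := by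
        rw [stbl, ENNReal.ofReal_mul zero_le_two, ENNReal.ofReal_ofNat,
          ENNReal.mul_rpow_of_ne_top ENNReal.ofNat_ne_top ENNReal.ofReal_ne_top]
    _ ≤ stbl d α s t := by
        rw [stbl, show -(d : ℝ) - α = -((d : ℝ) + α) by ring, ENNReal.rpow_neg, ENNReal.rpow_neg]
        exact ENNReal.inv_le_inv.2 (ENNReal.rpow_le_rpow (ENNReal.ofReal_le_ofReal h) hdα)

lemma stbl_comm {d : ℕ} (α : ℝ) (x y : Euc d) : stbl d α x y = stbl d α y x := by
  rw [stbl, stbl, dist_comm]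

lemma inv_two_mul_indSum_mul_le {d : ℕ} {Γ : Config d} {x y : Euc d} {a b : ℝ≥0∞}
    (h₁ : y - x ∈ Γ.cone x → a ≤ b) (h₂ : x - y ∈ Γ.cone y → a ≤ b) :
    2⁻¹ * indSum Γ x y * a ≤ b := by
  by_cases h : y - x ∈ Γ.cone x ∨ x - y ∈ Γ.cone y
  · have hind : indSum Γ x y ≤ 2 :=
      (add_le_add (Set.indicator_le_self _ _ _) (Set.indicator_le_self _ _ _)).trans_eq
        one_add_one_eq_two
    calc 2⁻¹ * indSum Γ x y * a ≤ 2⁻¹ * 2 * a := by gcongr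
      _ = a := by rw [ENNReal.inv_mul_cancel two_ne_zero ENNReal.ofNat_ne_top, one_mul]
      _ ≤ b := h.elim h₁ h₂
  · rw [not_or] at h
    simp [indSum, h.1, h.2]

lemma dist_le_two_mul_dist_of_mem_cube {d : ℕ} {X Y s t : Euc d} (hs : s ∈ cube d 1 X)
    (ht : t ∈ cube d 1 Y) (hXY : √d ≤ dist X Y) : dist s t ≤ 2 * dist X Y := by
  have hsX := norm_sub_le_of_mem_cube hs
  have htY := norm_sub_le_of_mem_cube ht
  rw [← dist_eq_norm] at hsX htY
  calc dist s t ≤ dist s X + dist X Y + dist t Y := by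
        simpa only [dist_comm Y t] using dist_triangle4 s X Y t
    _ ≤ 2 * dist X Y := by linarith

namespace Config

variable {d : ℕ} (Γ : Config d)

def coneGraph : Set (Euc d × Euc d) := {p | p.2 - p.1 ∈ Γ.cone p.1}

def axisNear (z w : Euc d) (δ : ℝ) : Set (Euc d) :=
  {s | s ∈ cube d 1 z ∧ ‖Γ.axis s - w‖ ≤ δ}

lemma exists_volume_axisNear_ge {W : Finset (Euc d)} {δ : ℝ} (hW : W.Nonempty)
    (hnet : ∀ v : Euc d, ‖v‖ = 1 → ∃ w ∈ W, ‖v - w‖ ≤ δ) (z : Euc d) :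
    ∃ w ∈ W, (W.card : ℝ≥0∞)⁻¹ ≤ volume (Γ.axisNear z w δ) := by
  have hcover : cube d 1 z ⊆ ⋃ w ∈ W, Γ.axisNear z w δ := fun s hs => by
    obtain ⟨w, hw, hsw⟩ := hnet _ (Γ.axis_norm s)
    exact Set.mem_biUnion hw ⟨hs, hsw⟩
  simpa [volume_cube] using exists_measure_div_card_le (μ := volume) hW hcover

variable {Γ}

lemma volume_axisNear_mul_le {ϑ θ δ : ℝ} {X Y w : Euc d} (hϑ : ϑ ∈ Set.Ioc 0 (π / 2))
    (hΓ : Γ.Admissible ϑ) (hδ : 0 ≤ δ) (hδ2 : δ ≤ 1 / 2) (hθ : cos ϑ + 4 * δ ≤ cos θ)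
    (hXY : √d ≤ dist X Y) (hw : Y - X ∈ doubleCone d w θ) :
    volume (Γ.axisNear X w δ) * ENNReal.ofReal δ ^ d ≤
      volume (Γ.coneGraph ∩ cube d 1 X ×ˢ cube d 1 Y) := by
  rw [Measure.volume_eq_prod]
  refine measure_mul_le_prod_of_le_measure_prodMk
    (hΓ.2.inter ((measurableSet_cube d 1 X).prod (measurableSet_cube d 1 Y))) fun s hs => ?_
  have hu : s + (Y - X) ∈ cube d 1 Y := fun i => by
    convert hs.1 i using 2; simp only [PiLp.add_apply, PiLp.sub_apply]; ring
  obtain ⟨c, hc⟩ := exists_cube_subset_inter_cube hu (h := 1) (ℓ := δ) (by linarith)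
  rw [← volume_cube d δ c]
  refine measure_mono fun t ht => ⟨?_, hs.1, (hc ht).1⟩
  have herr : ‖t - (s + (Y - X))‖ ≤ δ * ‖Y - X‖ := by
    calc ‖t - (s + (Y - X))‖ ≤ √d * δ := by simpa using norm_sub_le_of_mem_cube (hc ht).2
      _ ≤ δ * ‖Y - X‖ := by rw [mul_comm, ← dist_eq_norm, dist_comm]; gcongr
  have hsplit : t - s = (Y - X) + (t - (s + (Y - X))) := by abel
  show t - s ∈ Γ.cone s
  rw [hsplit]
  exact Γ.doubleCone_subset_cone hΓ.1 hϑ.1.le s <| add_mem_doubleCone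
    (cos_nonneg_of_mem_Icc ⟨by linarith [hϑ.1, pi_pos], hϑ.2⟩) (Γ.axis_norm s) hs.2 herr hw hθ

lemma mul_volume_coneGraph_le_lintegral {α Λ : ℝ} {k : Euc d → Euc d → ℝ≥0∞} {X Y : Euc d}
    (hΓ : MeasurableSet Γ.coneGraph)
    (hk : ∀ x y, (ENNReal.ofReal Λ)⁻¹ * indSum Γ x y * stbl d α x y ≤ k x y)
    (hα : α ∈ Set.Icc 0 2) (hXY : √d ≤ dist X Y) :
    (ENNReal.ofReal Λ)⁻¹ * 2 ^ (-(d : ℝ) - 2) * stbl d α X Y *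
        volume (Γ.coneGraph ∩ cube d 1 X ×ˢ cube d 1 Y) ≤
      ∫⁻ p in cube d 1 X ×ˢ cube d 1 Y, k p.1 p.2 := by
  rw [← setLIntegral_const]
  refine (setLIntegral_mono'
    (hΓ.inter ((measurableSet_cube d 1 X).prod (measurableSet_cube d 1 Y)))
    fun p ⟨hp, hs, ht⟩ => ?_).trans (lintegral_mono_set Set.inter_subset_right)
  have hind : 1 ≤ indSum Γ p.1 p.2 := by
    rw [indSum, Set.indicator_of_mem (show p.2 - p.1 ∈ Γ.cone p.1 from hp)]
    exact le_self_add
  calc (ENNReal.ofReal Λ)⁻¹ * 2 ^ (-(d : ℝ) - 2) * stbl d α X Y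
      = (ENNReal.ofReal Λ)⁻¹ * 1 * (2 ^ (-(d : ℝ) - 2) * stbl d α X Y) := by ring
    _ ≤ (ENNReal.ofReal Λ)⁻¹ * indSum Γ p.1 p.2 * stbl d α p.1 p.2 := by
        gcongr
        exact two_rpow_mul_stbl_le hα (dist_le_two_mul_dist_of_mem_cube hs ht hXY)
    _ ≤ k p.1 p.2 := hk _ _

lemma le_lintegral_of_le_volume_axisNear {ϑ θ δ α Λ : ℝ} {m : ℝ≥0∞}
    {k : Euc d → Euc d → ℝ≥0∞} {X Y w : Euc d} (hϑ : ϑ ∈ Set.Ioc 0 (π / 2))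
    (hΓ : Γ.Admissible ϑ) (hk : ∀ x y, (ENNReal.ofReal Λ)⁻¹ * indSum Γ x y * stbl d α x y ≤ k x y)
    (hα : α ∈ Set.Icc 0 2) (hδ : δ ∈ Set.Ioc 0 (1 / 2)) (hθ : cos ϑ + 4 * δ ≤ cos θ)
    (hm : m ≤ volume (Γ.axisNear X w δ)) (hXY : √d ≤ dist X Y)
    (hw : Y - X ∈ doubleCone d w θ) :
    (ENNReal.ofReal Λ)⁻¹ * 2 ^ (-(d : ℝ) - 2) * stbl d α X Y * (m * ENNReal.ofReal δ ^ d) ≤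
      ∫⁻ p in cube d 1 X ×ˢ cube d 1 Y, k p.1 p.2 := by
  refine le_trans ?_ (mul_volume_coneGraph_le_lintegral hΓ.2 hk hα hXY)
  gcongr
  exact (mul_le_mul_left hm _).trans
    (volume_axisNear_mul_le hϑ hΓ hδ.1.le hδ.2 hθ hXY hw)

end Config

/-- Proposition 3.5: the discretized kernel `ω₁ᵏ` admits a lower bound of
cone type, with constants `C`, `ϑ'` depending only on `d` and `ϑ`. -/
theorem stmt8 (d : ℕ) (hd : 1 ≤ d) (ϑ : ℝ) (hϑ : ϑ ∈ Set.Ioc 0 (Real.pi / 2)) :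
    ∃ (C ϑ' : ℝ), 0 < C ∧ ϑ' ∈ Set.Ioc 0 (Real.pi / 2) ∧
      ∀ α ∈ Set.Ioo (0 : ℝ) 2, ∀ Λ : ℝ, 1 ≤ Λ →
        ∀ Γ : Config d, Γ.Admissible ϑ →
          ∀ k : Euc d → Euc d → ℝ≥0∞, Measurable (Function.uncurry k) →
            (∀ x y, k x y = k y x) →
            (∀ x y, (ENNReal.ofReal Λ)⁻¹ * indSum Γ x y * stbl d α x y ≤ k x y ∧
              k x y ≤ ENNReal.ofReal Λ * stbl d α x y) →
            ∃ Γ' : Config d, Γ'.Bounded ϑ' ∧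
              ∀ x y : Fin d → ℤ, Real.sqrt d < dist (latt d x) (latt d y) →
                ENNReal.ofReal C * (ENNReal.ofReal Λ)⁻¹ *
                    indSum Γ' (latt d x) (latt d y) * stbl d α (latt d x) (latt d y) ≤
                  ∫⁻ p in (cube d 1 (latt d x)) ×ˢ (cube d 1 (latt d y)), k p.1 p.2 := by
  have hϑ2 : ϑ / 2 ∈ Set.Ioc 0 (π / 2) := ⟨by linarith [hϑ.1], by linarith [hϑ.2, pi_pos]⟩
  obtain ⟨δ, hδ, hδϑ⟩ : ∃ δ : ℝ, δ ∈ Set.Ioc 0 (1 / 2) ∧ cos ϑ + 4 * δ = cos (ϑ / 2) :=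
    ⟨_, cos_half_sub_cos_div_four_mem hϑ, by ring⟩
  obtain ⟨W, hWne, hWunit, hWnet⟩ := exists_finset_unit_net hd hδ.1
  refine ⟨2⁻¹ * (2 ^ (-(d : ℝ) - 2) * ((W.card : ℝ)⁻¹ * δ ^ d)), ϑ / 2,
    by have := hWne.card_pos; have := hδ.1; positivity, hϑ2, ?_⟩
  intro α hα Λ _ Γ hΓ k _ hksym hk
  choose a haW ha using Γ.exists_volume_axisNear_ge hWne hWnet
  refine ⟨⟨a, fun _ => ϑ / 2, fun z => hWunit _ (haW z), fun _ => hϑ2⟩, fun _ => le_rfl,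
    fun x y hxy => ?_⟩
  have hone (X Y : Euc d) (hXY : √d ≤ dist X Y) :=
    Config.le_lintegral_of_le_volume_axisNear hϑ hΓ (fun x y => (hk x y).1)
      (Set.Ioo_subset_Icc_self hα) hδ hδϑ.le (ha X) hXY (Y := Y)
  have hC : ENNReal.ofReal (2⁻¹ * (2 ^ (-(d : ℝ) - 2) * ((W.card : ℝ)⁻¹ * δ ^ d))) =
      2⁻¹ * (2 ^ (-(d : ℝ) - 2) * ((W.card : ℝ≥0∞)⁻¹ * ENNReal.ofReal δ ^ d)) := by
    rw [ENNReal.ofReal_mul (by norm_num), ENNReal.ofReal_mul (by positivity),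
      ENNReal.ofReal_mul (by positivity), ENNReal.ofReal_inv_of_pos (by norm_num),
      ENNReal.ofReal_inv_of_pos (by exact_mod_cast hWne.card_pos), ENNReal.ofReal_pow hδ.1.le,
      ← ENNReal.ofReal_rpow_of_pos two_pos, ENNReal.ofReal_ofNat, ENNReal.ofReal_natCast]
  calc _ = 2⁻¹ * indSum _ (latt d x) (latt d y) * ((ENNReal.ofReal Λ)⁻¹ *
        2 ^ (-(d : ℝ) - 2) * stbl d α (latt d x) (latt d y) *
          ((W.card : ℝ≥0∞)⁻¹ * ENNReal.ofReal δ ^ d)) := by rw [hC]; ring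
    _ ≤ _ := by
        refine inv_two_mul_indSum_mul_le (hone _ _ hxy.le) fun hYX => ?_
        rw [stbl_comm, setLIntegral_prod_comm hksym]
        exact hone _ _ (dist_comm (latt d x) (latt d y) ▸ hxy.le) hYX
end
end

section
/- Let d ≥ 1, ϑ ∈ (0, π/2], and let Γ be a ϑ-bounded configuration on ℝ^d. Then for every connected open set U ⊂ ℝ^d and any two points x, y ∈ U, x and y lie in the same connected component of the undirected graph G_U(Γ): there exists a finite sequence x = z₀, z₁, …, z_N = y of points of ℝ^d such that for each i < N either (z_i ∈ U and z_{i+1} ∈ z_i + Γ(z_i)) or (z_{i+1} ∈ U and z_i ∈ z_{i+1} + Γ(z_{i+1})). -/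
open MeasureTheory Metric
open scoped ENNReal

noncomputable section

/-!
Let `X` be the set of points of `U` reachable from `x` and `Y` the rest of `U`. No path of
length at most two joins a point `x'` of `X` to a point `y'` of `Y`; since the cones are open
with apex angle at least `ϑ`, this forces `y' - x'` to stay uniformly away from the plane
spanned by the axes at `x'` and `y'`. Grouping points according to the approximate direction of
their axis, the common boundary `closure X ∩ closure Y` becomes a finite union of sets that
project injectively, with Lipschitz inverse, onto subspaces of codimension two. The points `m`
for which the segment from a fixed point `p` to `m` hits such a set form a Lipschitz image of a
set of dimension `d - 1`, hence a Lebesgue-null set. So, near a boundary point lying in `U`, a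
generic broken line from a point of `X` off `closure Y` to a point of `Y` off `closure X` misses
`closure X ∩ closure Y`, which is impossible for a connected set covered by the two closures.
-/

open Module Submodule Relation

theorem Relation.ReflTransGen.exists_seq {α : Type*} {r : α → α → Prop} {a b : α}
    (h : ReflTransGen r a b) :
    ∃ (N : ℕ) (p : ℕ → α), p 0 = a ∧ p N = b ∧ ∀ i < N, r (p i) (p (i + 1)) := by
  induction h with
  | refl => exact ⟨0, fun _ => a, rfl, rfl, by simp⟩
  | @tail c c' _ hcc' ih =>
    obtain ⟨N, p, h0, hN, hp⟩ := ih
    refine ⟨N + 1, fun i => if i ≤ N then p i else c', by simp [h0], by simp, fun i hi => ?_⟩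
    rcases Nat.lt_succ_iff_lt_or_eq.mp hi with hi | rfl
    · simpa [hi.le, Nat.succ_le_of_lt hi] using hp i hi
    · simpa [hN] using hcc'

section NormedSpace

variable {E : Type*} [NormedAddCommGroup E] [NormedSpace ℝ E]

theorem linearIndependent_pair_of_mul_le {e f : E} {δ : ℝ} (hδ : 0 < δ)
    (h : ∀ a b : ℝ, δ * (|a| + |b|) ≤ ‖a • e + b • f‖) : LinearIndependent ℝ ![e, f] := by
  refine LinearIndependent.pair_iff.mpr fun a b hab => ?_
  have hab' := h a b
  rw [hab, norm_zero] at hab'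
  have : |a| + |b| ≤ 0 := nonpos_of_mul_nonpos_right hab' hδ
  exact ⟨abs_eq_zero.mp (by linarith [abs_nonneg a, abs_nonneg b]),
    abs_eq_zero.mp (by linarith [abs_nonneg a, abs_nonneg b])⟩

variable [FiniteDimensional ℝ E] [MeasurableSpace E] [BorelSpace E] (μ : Measure E)
  [μ.IsAddHaarMeasure] {F : Type*} [NormedAddCommGroup F] [NormedSpace ℝ F]
  [FiniteDimensional ℝ F] [MeasurableSpace F] [BorelSpace F]

theorem LipschitzOnWith.addHaar_image_null_of_finrank_lt (hF : finrank ℝ F < finrank ℝ E)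
    {Ψ : F → E} {T : Set F} {K : NNReal} (hΨ : LipschitzOnWith K Ψ T) : μ (Ψ '' T) = 0 := by
  have hT : (μH[finrank ℝ E] : Measure F) T = 0 := by
    rw [Real.hausdorffMeasure_of_finrank_lt (by exact_mod_cast hF)]; rfl
  have himage := hΨ.hausdorffMeasure_image_le (d := finrank ℝ E) (Nat.cast_nonneg _)
  rw [hT, mul_zero, nonpos_iff_eq_zero] at himage
  exact Measure.absolutelyContinuous_isAddHaarMeasure μ μH[finrank ℝ E] himage

theorem addHaar_setOf_segment_inter_null (hF : finrank ℝ F + 1 < finrank ℝ E) {S : Set E}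
    {P : E → F} {κ : ℝ} (hκ : 0 < κ) (hP : ∀ τ ∈ S, ∀ τ' ∈ S, κ * dist τ τ' ≤ dist (P τ) (P τ'))
    {p : E} (hp : p ∉ S) :
    μ {m | (segment ℝ p m ∩ S).Nonempty} = 0 := by
  have hinj : S.InjOn P := fun τ hτ τ' hτ' h => by
    have := hP τ hτ τ' hτ'
    rw [h, dist_self] at this
    exact dist_le_zero.mp (nonpos_of_mul_nonpos_right this hκ)
  set G := Function.invFunOn P S
  have hG : ∀ τ ∈ S, G (P τ) = τ := fun τ hτ => hinj.leftInvOn_invFunOn hτ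
  -- If `p + t • (m - p) ∈ S` with `0 < t ≤ 1`, then `m = Ψ (P (p + t • (m - p)), t⁻¹)`.
  set Ψ : F × ℝ → E := fun q => p + q.2 • (G q.1 - p)
  set T : ℕ → Set (F × ℝ) := fun n => (P '' (S ∩ closedBall p n)) ×ˢ Set.Icc 1 (n : ℝ)
  have hcover : {m | (segment ℝ p m ∩ S).Nonempty} ⊆ ⋃ n : ℕ, Ψ '' T n := by
    rintro m ⟨ζ, hζseg, hζS⟩
    rw [segment_eq_image'] at hζseg
    obtain ⟨t, ⟨ht0, ht1⟩, rfl⟩ := hζseg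
    have ht : t ≠ 0 := by rintro rfl; simp_all
    obtain ⟨n, hn⟩ := exists_nat_ge (max t⁻¹ (dist (p + t • (m - p)) p))
    refine Set.mem_iUnion.mpr ⟨n, (P (p + t • (m - p)), t⁻¹), ⟨⟨_, ⟨hζS, ?_⟩, rfl⟩, ?_, ?_⟩, ?_⟩
    · exact mem_closedBall.mpr ((le_max_right _ _).trans hn)
    · exact one_le_inv₀ (lt_of_le_of_ne ht0 (Ne.symm ht)) |>.mpr ht1
    · exact (le_max_left _ _).trans hn
    · simp only [Ψ, hG _ hζS, add_sub_cancel_left, smul_smul, inv_mul_cancel₀ ht, one_smul]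
      abel
  refine measure_mono_null hcover (measure_iUnion_null fun n => ?_)
  refine LipschitzOnWith.addHaar_image_null_of_finrank_lt μ
    (by rw [finrank_prod, finrank_self]; exact hF) (K := (n * (1 + κ⁻¹)).toNNReal) ?_
  refine LipschitzOnWith.of_dist_le_mul ?_
  rintro ⟨_, s⟩ ⟨⟨τ, ⟨hτS, hτ⟩, rfl⟩, hs⟩ ⟨_, s'⟩ ⟨⟨τ', ⟨hτ'S, -⟩, rfl⟩, hs'⟩
  have hττ' : dist τ τ' ≤ κ⁻¹ * dist (P τ) (P τ') := by
    rw [le_inv_mul_iff₀ hκ]; exact hP τ hτS τ' hτ'S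
  have hτp : ‖τ - p‖ ≤ n := mem_closedBall_iff_norm.mp hτ
  have hs'n : |s'| ≤ n := abs_le.mpr ⟨by linarith [hs'.1, hs'.2], hs'.2⟩
  simp only [Ψ, hG τ hτS, hG τ' hτ'S]
  rw [Real.coe_toNNReal _ (by positivity), Prod.dist_eq, dist_eq_norm]
  set M := max (dist (P τ) (P τ')) (dist s s')
  calc ‖p + s • (τ - p) - (p + s' • (τ' - p))‖
      = ‖(s - s') • (τ - p) + s' • (τ - τ')‖ := by congr 1; module
    _ ≤ |s - s'| * ‖τ - p‖ + |s'| * dist τ τ' := by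
      rw [dist_eq_norm, ← Real.norm_eq_abs, ← Real.norm_eq_abs, ← norm_smul, ← norm_smul]
      exact norm_add_le _ _
    _ ≤ M * n + n * (κ⁻¹ * M) := by
      gcongr
      · exact le_max_right _ _
      · exact hττ'.trans (by gcongr; exact le_max_left _ _)
    _ = n * (1 + κ⁻¹) * M := by ring

end NormedSpace

section InnerProductSpace

variable {E : Type*} [NormedAddCommGroup E] [InnerProductSpace ℝ E] [FiniteDimensional ℝ E]

theorem mul_norm_le_norm_orthogonalProjectionOnto {e f C : E} (he : ‖e‖ ≤ 1) (hf : ‖f‖ ≤ 1)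
    {δ : ℝ} (hδ : 0 < δ) (h : ∀ a b : ℝ, δ * (|a| + |b|) ≤ ‖C - a • e - b • f‖) :
    δ / (1 + δ) * ‖C‖ ≤ ‖(span ℝ {e, f})ᗮ.orthogonalProjectionOnto C‖ := by
  set K := span ℝ {e, f}
  obtain ⟨a, b, hab⟩ := mem_span_pair.mp (K.starProjection_apply_mem C)
  have hperp : ‖Kᗮ.orthogonalProjectionOnto C‖ = ‖C - a • e - b • f‖ := by
    rw [← Submodule.norm_coe, ← starProjection_apply, starProjection_orthogonal_val, ← hab,
      sub_add_eq_sub_sub]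
  have hspan : ‖a • e + b • f‖ ≤ |a| + |b| := by
    refine (norm_add_le _ _).trans ?_
    rw [norm_smul, norm_smul, Real.norm_eq_abs, Real.norm_eq_abs]
    gcongr <;> nlinarith [abs_nonneg a, abs_nonneg b]
  have hC : ‖C‖ ≤ ‖C - a • e - b • f‖ + ‖a • e + b • f‖ := by
    simpa [sub_sub, add_comm] using norm_le_insert' C (a • e + b • f)
  rw [hperp, div_mul_eq_mul_div, div_le_iff₀ (by linarith)]
  nlinarith [h a b]

variable [MeasurableSpace E] [BorelSpace E] (μ : Measure E) [μ.IsAddHaarMeasure]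

theorem addHaar_setOf_segment_inter_null_of_far_from_span {S : Set E} {e f : E}
    (he : ‖e‖ ≤ 1) (hf : ‖f‖ ≤ 1) {δ : ℝ} (hδ : 0 < δ)
    (hS : ∀ τ ∈ S, ∀ τ' ∈ S, ∀ a b : ℝ, δ * (|a| + |b|) ≤ ‖τ' - τ - a • e - b • f‖)
    {p : E} (hp : p ∉ S) : μ {m | (segment ℝ p m ∩ S).Nonempty} = 0 := by
  rcases S.eq_empty_or_nonempty with rfl | ⟨τ₀, hτ₀⟩
  · simp
  have hindep : LinearIndependent ℝ ![e, f] := linearIndependent_pair_of_mul_le hδ fun a b => by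
    simpa [sub_sub, norm_neg] using hS τ₀ hτ₀ τ₀ hτ₀ (-a) (-b)
  have hK : finrank ℝ (span ℝ {e, f}) = 2 := by
    have := finrank_span_eq_card hindep
    rwa [Matrix.range_cons_cons_empty, Fintype.card_fin] at this
  have hKperp := (span ℝ {e, f}).finrank_add_finrank_orthogonal
  refine addHaar_setOf_segment_inter_null μ (by omega) (κ := δ / (1 + δ))
    (div_pos hδ (by linarith)) (P := (span ℝ {e, f})ᗮ.orthogonalProjectionOnto)
    (fun τ hτ τ' hτ' => ?_) hp
  rw [dist_comm, dist_eq_norm, dist_comm, dist_eq_norm, ← map_sub]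
  exact mul_norm_le_norm_orthogonalProjectionOnto he hf hδ (hS τ hτ τ' hτ')

end InnerProductSpace
section Cone

variable {d : ℕ}

theorem mem_coneSet_iff {v h : Euc d} {θ : ℝ} :
    h ∈ coneSet d v θ ↔ h ≠ 0 ∧ Real.cos θ * ‖h‖ < inner ℝ v h := by
  refine and_congr_right fun h0 => ?_
  rw [lt_div_iff₀ (norm_pos_iff.mpr h0)]

theorem isOpen_coneSet (v : Euc d) (θ : ℝ) : IsOpen (coneSet d v θ) := by
  have : coneSet d v θ = {h | h ≠ 0} ∩ {h | Real.cos θ * ‖h‖ < inner ℝ v h} := by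
    ext h; exact mem_coneSet_iff
  rw [this]
  exact isOpen_compl_singleton.inter (isOpen_lt (by fun_prop) (by fun_prop))

theorem isOpen_doubleCone (v : Euc d) (θ : ℝ) : IsOpen (doubleCone d v θ) :=
  (isOpen_coneSet v θ).union ((isOpen_coneSet v θ).preimage continuous_neg)

theorem smul_add_mem_coneSet {v g : Euc d} (hv : ‖v‖ = 1) {θ c : ℝ} (hc : 0 < c)
    (hg : 2 * ‖g‖ < c * (1 - Real.cos θ)) : c • v + g ∈ coneSet d v θ := by
  have hcos := Real.cos_le_one θ
  have hcos' := Real.neg_one_le_cos θ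
  have hgc : ‖g‖ < c := by nlinarith
  have hinner : c - ‖g‖ ≤ inner ℝ v (c • v + g) := by
    rw [inner_add_right, real_inner_smul_right, real_inner_self_eq_norm_sq, hv]
    linarith [neg_le_of_abs_le ((abs_real_inner_le_norm v g).trans_eq (by rw [hv, one_mul]))]
  have hnorm : ‖c • v + g‖ ≤ c + ‖g‖ := by
    simpa [norm_smul, hv, abs_of_pos hc] using norm_add_le (c • v) g
  refine mem_coneSet_iff.mpr ⟨fun h0 => ?_, ?_⟩
  · rw [h0, inner_zero_right] at hinner
    linarith
  · refine lt_of_lt_of_le ?_ hinner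
    rcases le_total 0 (Real.cos θ) with h | h
    · nlinarith [norm_nonneg g]
    · nlinarith [norm_nonneg (c • v + g)]

theorem smul_add_mem_doubleCone {v g : Euc d} (hv : ‖v‖ = 1) {θ a : ℝ} (ha : a ≠ 0)
    (hg : 2 * ‖g‖ < |a| * (1 - Real.cos θ)) : a • v + g ∈ doubleCone d v θ := by
  rcases ha.lt_or_gt with ha | ha
  · right
    rw [neg_add, ← neg_smul]
    exact smul_add_mem_coneSet hv (neg_pos.mpr ha) (by rwa [norm_neg, ← abs_of_neg ha])
  · exact Or.inl (smul_add_mem_coneSet hv ha (by rwa [← abs_of_pos ha]))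

end Cone

namespace Config

variable {d : ℕ} (Γ : Config d) {ϑ : ℝ}

theorem cos_angle_le (hΓ : Γ.Bounded ϑ) (hϑ : 0 ≤ ϑ) (z : Euc d) :
    Real.cos (Γ.angle z) ≤ Real.cos ϑ :=
  Real.cos_le_cos_of_nonneg_of_le_pi hϑ
    (by linarith [(Γ.angle_mem z).2, Real.pi_pos]) (hΓ z)

theorem cos_lt_one (hΓ : Γ.Bounded ϑ) (hϑ : 0 < ϑ) : Real.cos ϑ < 1 := by
  simpa using Real.cos_lt_cos_of_nonneg_of_le_pi le_rfl
    ((hΓ 0).trans ((Γ.angle_mem 0).2.trans (by linarith [Real.pi_pos]))) hϑ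

theorem smul_axis_add_mem_cone (hΓ : Γ.Bounded ϑ) (hϑ : 0 ≤ ϑ) (z : Euc d) {a : ℝ} {g : Euc d}
    (ha : a ≠ 0) (hg : 2 * ‖g‖ < |a| * (1 - Real.cos ϑ)) : a • Γ.axis z + g ∈ Γ.cone z :=
  smul_add_mem_doubleCone (Γ.axis_norm z) ha
    (hg.trans_le (by gcongr; exact Γ.cos_angle_le hΓ hϑ z))

variable {U : Set (Euc d)}

theorem reflTransGen_adjIn_symm {x y : Euc d} (h : ReflTransGen (adjIn d Γ U) x y) :
    ReflTransGen (adjIn d Γ U) y x :=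
  reflTransGen_swap.mp (ReflTransGen.mono (fun _ _ => Or.symm) _ _ h)

theorem reflTransGen_adjIn_of_near_span (hΓ : Γ.Bounded ϑ) (hϑ : 0 ≤ ϑ) {x y : Euc d}
    (hx : x ∈ U) (hy : y ∈ U) {a b : ℝ}
    (h : 4 * ‖y - x - a • Γ.axis x - b • Γ.axis y‖ < (1 - Real.cos ϑ) * (|a| + |b|)) :
    ReflTransGen (adjIn d Γ U) x y := by
  wlog hba : |b| ≤ |a| generalizing x y a b
  · refine Γ.reflTransGen_adjIn_symm (this hy hx (a := -b) (b := -a) ?_ (by simp; linarith))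
    have : x - y - (-b) • Γ.axis y - (-a) • Γ.axis x =
        -(y - x - a • Γ.axis x - b • Γ.axis y) := by
      module
    rwa [this, norm_neg, abs_neg, abs_neg, add_comm |b|]
  -- The path is `x → y - b • Γ.axis y → y`: its first step lies in the cone at `x`, whose
  -- axis carries the larger coefficient, and its second step lies on the axis at `y`.
  set g := y - x - a • Γ.axis x - b • Γ.axis y
  have hΔ : 0 < 1 - Real.cos ϑ := by
    by_contra hneg
    nlinarith [norm_nonneg g, abs_nonneg a, abs_nonneg b]
  have hg : 2 * ‖g‖ < |a| * (1 - Real.cos ϑ) := by nlinarith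
  have ha : a ≠ 0 := by
    rintro rfl
    simp only [abs_zero, zero_mul] at hg
    linarith [norm_nonneg g]
  have hxm : adjIn d Γ U x (y - b • Γ.axis y) := by
    refine Or.inl ⟨hx, ?_⟩
    convert Γ.smul_axis_add_mem_cone hΓ hϑ x ha hg using 1
    simp only [g]; abel
  refine ReflTransGen.head hxm ?_
  rcases eq_or_ne b 0 with rfl | hb
  · simpa using ReflTransGen.refl
  refine ReflTransGen.single (Or.inr ⟨hy, ?_⟩)
  convert Γ.smul_axis_add_mem_cone hΓ hϑ y (neg_ne_zero.mpr hb) (g := 0)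
    (by simpa using mul_pos (abs_pos.mpr hb) hΔ) using 1
  simp

theorem far_from_span_of_mem_closure (hΓ : Γ.Bounded ϑ) (hϑ : 0 ≤ ϑ) {X Y : Set (Euc d)}
    (hXU : X ⊆ U) (hYU : Y ⊆ U) (hXY : ∀ x ∈ X, ∀ y ∈ Y, ¬ ReflTransGen (adjIn d Γ U) x y)
    {e f : Euc d} {ε : ℝ} {τ τ' : Euc d} (hτ : τ ∈ closure {z ∈ X | dist (Γ.axis z) e < ε})
    (hτ' : τ' ∈ closure {z ∈ Y | dist (Γ.axis z) f < ε}) (a b : ℝ) :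
    (1 - Real.cos ϑ - 4 * ε) * (|a| + |b|) ≤ 4 * ‖τ' - τ - a • e - b • f‖ := by
  have hpair : ∀ x ∈ {z ∈ X | dist (Γ.axis z) e < ε}, ∀ y ∈ {z ∈ Y | dist (Γ.axis z) f < ε},
      (1 - Real.cos ϑ - 4 * ε) * (|a| + |b|) ≤ 4 * ‖y - x - a • e - b • f‖ := by
    rintro x ⟨hxX, hxe⟩ y ⟨hyY, hyf⟩
    have hfar : (1 - Real.cos ϑ) * (|a| + |b|) ≤ 4 * ‖y - x - a • Γ.axis x - b • Γ.axis y‖ :=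
      not_lt.mp fun hlt => hXY x hxX y hyY
        (Γ.reflTransGen_adjIn_of_near_span hΓ hϑ (hXU hxX) (hYU hyY) hlt)
    have hdrift : ‖y - x - a • Γ.axis x - b • Γ.axis y‖
        ≤ ‖y - x - a • e - b • f‖ + |a| * ε + |b| * ε := by
      calc ‖y - x - a • Γ.axis x - b • Γ.axis y‖
          = ‖(y - x - a • e - b • f) + a • (e - Γ.axis x) + b • (f - Γ.axis y)‖ := by
            congr 1; module
        _ ≤ ‖y - x - a • e - b • f‖ + |a| * ‖e - Γ.axis x‖ + |b| * ‖f - Γ.axis y‖ := by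
            refine norm_add₃_le.trans_eq ?_
            rw [norm_smul, norm_smul, Real.norm_eq_abs, Real.norm_eq_abs]
        _ ≤ _ := by
            rw [← dist_eq_norm' (Γ.axis x) e, ← dist_eq_norm' (Γ.axis y) f]
            gcongr
    linear_combination hfar + 4 * hdrift
  have hclosed : IsClosed {q : Euc d × Euc d |
      (1 - Real.cos ϑ - 4 * ε) * (|a| + |b|) ≤ 4 * ‖q.2 - q.1 - a • e - b • f‖} :=
    isClosed_le continuous_const (by fun_prop)
  have hprod : closure {z ∈ X | dist (Γ.axis z) e < ε} ×ˢ closure {z ∈ Y | dist (Γ.axis z) f < ε}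
      ⊆ {q : Euc d × Euc d |
        (1 - Real.cos ϑ - 4 * ε) * (|a| + |b|) ≤ 4 * ‖q.2 - q.1 - a • e - b • f‖} := by
    rw [← closure_prod_eq]
    exact closure_minimal (fun q hq => hpair q.1 hq.1 q.2 hq.2) hclosed
  simpa using hprod (Set.mk_mem_prod hτ hτ')

theorem volume_setOf_segment_inter_closure_null (hΓ : Γ.Bounded ϑ) (hϑ : 0 < ϑ)
    {X Y : Set (Euc d)} (hXU : X ⊆ U) (hYU : Y ⊆ U)
    (hXY : ∀ x ∈ X, ∀ y ∈ Y, ¬ ReflTransGen (adjIn d Γ U) x y) {p : Euc d}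
    (hp : p ∉ closure X ∩ closure Y) :
    volume {m | (segment ℝ p m ∩ (closure X ∩ closure Y)).Nonempty} = 0 := by
  set Δ := 1 - Real.cos ϑ
  have hΔ : 0 < Δ := sub_pos.mpr (Γ.cos_lt_one hΓ hϑ)
  obtain ⟨t, ht, htfin, hcover⟩ :=
    finite_cover_balls_of_compact (isCompact_sphere (0 : Euc d) 1) (e := Δ / 8) (by positivity)
  set col : Set (Euc d) → Euc d → Set (Euc d) := fun A e => {z ∈ A | dist (Γ.axis z) e < Δ / 8}
  have hcol : ∀ A, closure A ⊆ ⋃ e ∈ t, closure (col A e) := by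
    intro A
    rw [← htfin.closure_biUnion]
    refine closure_mono fun z hz => ?_
    obtain ⟨e, he, hze⟩ :=
      Set.mem_iUnion₂.mp (hcover (mem_sphere_zero_iff_norm.mpr (Γ.axis_norm z)))
    exact Set.mem_biUnion he ⟨hz, hze⟩
  have hsub : {m | (segment ℝ p m ∩ (closure X ∩ closure Y)).Nonempty} ⊆ ⋃ e ∈ t, ⋃ f ∈ t,
      {m | (segment ℝ p m ∩ (closure (col X e) ∩ closure (col Y f))).Nonempty} := by
    rintro m ⟨z, hzseg, hzX, hzY⟩
    obtain ⟨e, he, hze⟩ := Set.mem_iUnion₂.mp (hcol X hzX)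
    obtain ⟨f, hf, hzf⟩ := Set.mem_iUnion₂.mp (hcol Y hzY)
    exact Set.mem_biUnion he (Set.mem_biUnion hf ⟨z, hzseg, hze, hzf⟩)
  refine measure_mono_null hsub ((measure_biUnion_null_iff htfin.countable).mpr fun e he =>
    (measure_biUnion_null_iff htfin.countable).mpr fun f hf => ?_)
  have hunit : ∀ c ∈ t, ‖c‖ ≤ 1 := fun c hc => (mem_sphere_zero_iff_norm.mp (ht hc)).le
  refine addHaar_setOf_segment_inter_null_of_far_from_span volume (hunit e he) (hunit f hf)
    (δ := Δ / 8) (by positivity) (fun τ hτ τ' hτ' a b => ?_)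
    (fun hpS => hp ⟨closure_mono (fun z hz => hz.1) hpS.1, closure_mono (fun z hz => hz.1) hpS.2⟩)
  linear_combination Γ.far_from_span_of_mem_closure hΓ hϑ.le hXU hYU hXY hτ.1 hτ'.2 a b / 4

theorem exists_mem_notMem_closure (hΓ : Γ.Bounded ϑ) (hϑ : 0 < ϑ) {X Y : Set (Euc d)}
    (hXY : ∀ x ∈ X, ∀ y ∈ Y, ¬ ReflTransGen (adjIn d Γ U) x y) {B : Set (Euc d)}
    (hB : IsOpen B) (hBU : B ⊆ U) {x : Euc d} (hxX : x ∈ X) (hxB : x ∈ B) :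
    ∃ z ∈ B, z ∉ closure Y := by
  set O := B ∩ (· - x) ⁻¹' Γ.cone x
  have hO : IsOpen O := hB.inter ((isOpen_doubleCone _ _).preimage (continuous_sub_right x))
  have hOY : Disjoint O Y := Set.disjoint_left.mpr fun z hz hzY =>
    hXY x hxX z hzY (ReflTransGen.single (Or.inl ⟨hBU hxB, hz.2⟩))
  obtain ⟨r, hr, hrB⟩ := Metric.isOpen_iff.mp hB x hxB
  have hmem : x + (r / 2) • Γ.axis x ∈ O := by
    refine ⟨hrB ?_, ?_⟩
    · simp [norm_smul, Γ.axis_norm, abs_of_pos hr, hr]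
    · have hmargin : 2 * ‖(0 : Euc d)‖ < |r / 2| * (1 - Real.cos ϑ) := by
        simpa using mul_pos (abs_pos.mpr (by positivity)) (sub_pos.mpr (Γ.cos_lt_one hΓ hϑ))
      simpa using Γ.smul_axis_add_mem_cone hΓ hϑ.le x (by positivity) hmargin
  exact ⟨_, hmem.1, Set.disjoint_left.mp (hOY.closure_right hO) hmem⟩

theorem exists_disjoint_segments (hΓ : Γ.Bounded ϑ) (hϑ : 0 < ϑ) {X Y : Set (Euc d)}
    (hXU : X ⊆ U) (hYU : Y ⊆ U) (hXY : ∀ x ∈ X, ∀ y ∈ Y, ¬ ReflTransGen (adjIn d Γ U) x y)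
    {a b : Euc d} (ha : a ∉ closure X ∩ closure Y) (hb : b ∉ closure X ∩ closure Y)
    (ω : Euc d) {r : ℝ} (hr : 0 < r) :
    ∃ m ∈ ball ω r, Disjoint (segment ℝ a m) (closure X ∩ closure Y) ∧
      Disjoint (segment ℝ m b) (closure X ∩ closure Y) := by
  have hnull := measure_union_null
    (Γ.volume_setOf_segment_inter_closure_null hΓ hϑ hXU hYU hXY ha)
    (Γ.volume_setOf_segment_inter_closure_null hΓ hϑ hXU hYU hXY hb)
  obtain ⟨m, hmB, hm⟩ := nonempty_of_measure_ne_zero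
    ((measure_sdiff_null hnull).trans_ne (measure_ball_pos volume ω hr).ne')
  simp only [Set.mem_union, Set.mem_ofPred_eq, not_or, ← Set.not_disjoint_iff_nonempty_inter,
    not_not] at hm
  exact ⟨m, hmB, hm.1, segment_symm ℝ m b ▸ hm.2⟩

theorem reflTransGen_adjIn (hΓ : Γ.Bounded ϑ) (hϑ : 0 < ϑ) (hU : IsOpen U)
    (hUc : IsPreconnected U) {x y : Euc d} (hx : x ∈ U) (hy : y ∈ U) :
    ReflTransGen (adjIn d Γ U) x y := by
  by_contra hxy
  set X := {z ∈ U | ReflTransGen (adjIn d Γ U) x z}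
  set Y := {z ∈ U | ¬ ReflTransGen (adjIn d Γ U) x z}
  have hUXY : U ⊆ closure X ∪ closure Y := fun z hz =>
    (em (ReflTransGen (adjIn d Γ U) x z)).imp (fun h => subset_closure ⟨hz, h⟩)
      (fun h => subset_closure ⟨hz, h⟩)
  have hXY : ∀ x' ∈ X, ∀ y' ∈ Y, ¬ ReflTransGen (adjIn d Γ U) x' y' :=
    fun x' hx' y' hy' h => hy'.2 (hx'.2.trans h)
  have hYX : ∀ y' ∈ Y, ∀ x' ∈ X, ¬ ReflTransGen (adjIn d Γ U) y' x' :=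
    fun y' hy' x' hx' h => hXY x' hx' y' hy' (Γ.reflTransGen_adjIn_symm h)
  obtain ⟨ω, hωU, hωX, hωY⟩ := isPreconnected_closed_iff.mp hUc _ _ isClosed_closure
    isClosed_closure hUXY ⟨x, hx, subset_closure ⟨hx, .refl⟩⟩ ⟨y, hy, subset_closure ⟨hy, hxy⟩⟩
  obtain ⟨r, hr, hrU⟩ := Metric.isOpen_iff.mp hU ω hωU
  obtain ⟨x₀, hx₀B, hx₀X⟩ := mem_closure_iff.mp hωX _ isOpen_ball (mem_ball_self hr)
  obtain ⟨y₀, hy₀B, hy₀Y⟩ := mem_closure_iff.mp hωY _ isOpen_ball (mem_ball_self hr)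
  obtain ⟨a, haB, ha⟩ := Γ.exists_mem_notMem_closure hΓ hϑ hXY isOpen_ball hrU hx₀X hx₀B
  obtain ⟨b, hbB, hb⟩ := Γ.exists_mem_notMem_closure hΓ hϑ hYX isOpen_ball hrU hy₀Y hy₀B
  obtain ⟨m, hmB, ham, hmb⟩ := Γ.exists_disjoint_segments hΓ hϑ (fun _ h => h.1) (fun _ h => h.1)
    hXY (fun h => ha h.2) (fun h => hb h.1) ω hr
  have hpath : IsPreconnected (segment ℝ a m ∪ segment ℝ m b) :=
    (convex_segment a m).isPreconnected.union m (right_mem_segment ℝ a m)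
      (left_mem_segment ℝ m b) (convex_segment m b).isPreconnected
  have hpathU : segment ℝ a m ∪ segment ℝ m b ⊆ closure X ∪ closure Y :=
    (Set.union_subset ((convex_ball ω r).segment_subset haB hmB)
      ((convex_ball ω r).segment_subset hmB hbB)).trans (hrU.trans hUXY)
  obtain ⟨z, hz, hzZ⟩ := isPreconnected_closed_iff.mp hpath _ _ isClosed_closure
    isClosed_closure hpathU ⟨a, Or.inl (left_mem_segment ℝ a m), (hUXY (hrU haB)).resolve_right ha⟩
    ⟨b, Or.inr (right_mem_segment ℝ m b), (hUXY (hrU hbB)).resolve_left hb⟩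
  exact hz.elim (Set.disjoint_left.mp ham · hzZ) (Set.disjoint_left.mp hmb · hzZ)

end Config

theorem stmt11_general (d : ℕ) (ϑ : ℝ) (hϑ : ϑ ∈ Set.Ioc 0 (Real.pi / 2))
    (Γ : Config d) (hΓ : Γ.Bounded ϑ) (U : Set (Euc d)) (hU : IsOpen U)
    (hUconn : IsConnected U) (x y : Euc d) (hx : x ∈ U) (hy : y ∈ U) :
    ∃ (N : ℕ) (p : ℕ → Euc d), p 0 = x ∧ p N = y ∧
      ∀ i < N, adjIn d Γ U (p i) (p (i + 1)) :=
  (Γ.reflTransGen_adjIn hΓ hϑ.1 hU hUconn.isPreconnected hx hy).exists_seq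

/-- Theorem 4.1: for a `ϑ`-bounded configuration and a connected open set
`U`, any two points of `U` are connected by an undirected edge path in `G_U(Γ)`. -/
theorem stmt11 (d : ℕ) (hd : 1 ≤ d) (ϑ : ℝ) (hϑ : ϑ ∈ Set.Ioc 0 (Real.pi / 2))
    (Γ : Config d) (hΓ : Γ.Bounded ϑ) (U : Set (Euc d)) (hU : IsOpen U)
    (hUconn : IsConnected U) (x y : Euc d) (hx : x ∈ U) (hy : y ∈ U) :
    ∃ (N : ℕ) (p : ℕ → Euc d), p 0 = x ∧ p N = y ∧
      ∀ i < N, adjIn d Γ U (p i) (p (i + 1)) :=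
  stmt11_general d ϑ hϑ Γ hΓ U hU hUconn x y hx hy
end
end

section
/- Let d ≥ 1, ϑ ∈ (0, π/2], and let C̃ = Ṽ(v,θ) be a cone with apex angle θ ≥ ϑ. Let x, y ∈ ℝ^d, fix r > |x − y| and assume R > (r + √d)/sin(ϑ) + r. Then the intersection B_R(x) ∩ (x + C̃) ∩ B_R(y) ∩ (y + C̃) contains a lattice point of ℤ^d. -/
open MeasureTheory Metric
open scoped ENNReal

noncomputable section

/-!
Put the lattice point near the axis point `x + c • v` with `c = (r + √d / 2) / sin ϑ`. Every
point within `c sin θ` of `x + c • v` lies in the cone `x + Ṽ(v, θ)`; rounding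
coordinates costs at most `√d / 2` and passing from `x` to `y` at most `r`, which together make
up exactly `c sin ϑ ≤ c sin θ`. The distances to `x` and `y` are then at most `c + √d / 2 + r`.
-/

open Real
open scoped RealInnerProductSpace

theorem cos_mul_norm_lt_inner_of_norm_sub_smul_lt {E : Type*} [NormedAddCommGroup E]
    [InnerProductSpace ℝ E] {v w : E} (hv : ‖v‖ = 1) {c θ : ℝ} (hc : 0 < c)
    (hw : ‖w - c • v‖ < c * sin θ) : cos θ * ‖w‖ < ⟪v, w⟫ := by
  obtain ⟨e, rfl⟩ : ∃ e, w = c • v + e := ⟨w - c • v, by abel⟩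
  rw [add_sub_cancel_left] at hw
  have ha : |⟪v, e⟫| ≤ ‖e‖ := by simpa [hv] using abs_real_inner_le_norm v e
  have hinner : ⟪v, c • v + e⟫ = c + ⟪v, e⟫ := by
    rw [inner_add_right, real_inner_smul_right, real_inner_self_eq_norm_sq, hv]; ring
  have hnorm : ‖c • v + e‖ ^ 2 = c ^ 2 + 2 * c * ⟪v, e⟫ + ‖e‖ ^ 2 := by
    rw [norm_add_sq_real, real_inner_smul_left, norm_smul, norm_of_nonneg hc.le, hv]; ring
  have hpos : 0 < c + ⟪v, e⟫ := by
    nlinarith [neg_abs_le ⟪v, e⟫, sin_le_one θ]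
  -- with `a = ⟪v, e⟫`: `(c + a)² - cos² θ ‖w‖² = (a + c sin² θ)² + cos² θ (c² sin² θ - ‖e‖²)`
  have hsq : (cos θ * ‖c • v + e‖) ^ 2 < (c + ⟪v, e⟫) ^ 2 := by
    have hgap : 0 < c ^ 2 * sin θ ^ 2 - ‖e‖ ^ 2 := by nlinarith [norm_nonneg e]
    rw [mul_pow, hnorm]
    rcases (sq_nonneg (cos θ)).eq_or_lt with h0 | h0
    · rw [← h0, zero_mul]; exact pow_pos hpos 2
    · nlinarith [mul_pos h0 hgap, sq_nonneg (⟪v, e⟫ + c * sin θ ^ 2), cos_sq_add_sin_sq θ]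
  rw [hinner]
  exact (le_abs_self _).trans_lt (abs_lt_of_sq_lt_sq hsq hpos.le)

theorem sub_mem_coneSet_of_dist_lt {d : ℕ} {v : Euc d} (hv : ‖v‖ = 1) {c θ : ℝ} (hc : 0 < c)
    {x z : Euc d} (h : dist z (x + c • v) < c * sin θ) : z - x ∈ coneSet d v θ := by
  rw [dist_eq_norm, ← sub_sub] at h
  have key := cos_mul_norm_lt_inner_of_norm_sub_smul_lt hv hc h
  have hne : z - x ≠ 0 := fun h0 => by simp [h0] at key
  exact ⟨hne, (lt_div_iff₀ (norm_pos_iff.mpr hne)).mpr key⟩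

theorem exists_dist_latt_le (d : ℕ) (p : Euc d) : ∃ z, dist (latt d z) p ≤ √d / 2 := by
  refine ⟨fun i => round (p i), ?_⟩
  have hcoord : ∀ i, dist (latt d (fun i => round (p i)) i) (p i) ^ 2 ≤ (1 / 2) ^ 2 := by
    intro i
    refine pow_le_pow_left₀ dist_nonneg ?_ 2
    simpa [latt, Real.dist_eq, abs_sub_comm] using abs_sub_round (p i)
  calc dist (latt d fun i => round (p i)) p
      ≤ √(∑ _i : Fin d, (1 / 2 : ℝ) ^ 2) := by
        rw [EuclideanSpace.dist_eq]
        exact sqrt_le_sqrt (Finset.sum_le_sum fun i _ => hcoord i)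
    _ = √d / 2 := by
        rw [Finset.sum_const, Finset.card_univ, Fintype.card_fin, nsmul_eq_mul,
          sqrt_mul (Nat.cast_nonneg d), sqrt_sq (by norm_num)]
        ring

theorem stmt15_general (d : ℕ) (ϑ : ℝ) (hϑ : ϑ ∈ Set.Ioc 0 (Real.pi / 2))
    (θ : ℝ) (hθ1 : ϑ ≤ θ) (hθ2 : θ ≤ Real.pi / 2) (v : Euc d) (hv : ‖v‖ = 1)
    (x y : Euc d) (r R : ℝ) (hr : dist x y < r)
    (hR : (r + Real.sqrt d) / Real.sin ϑ + r < R) :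
    ∃ z : Fin d → ℤ, latt d z ∈ ball x R ∧ latt d z - x ∈ coneSet d v θ ∧
      latt d z ∈ ball y R ∧ latt d z - y ∈ coneSet d v θ := by
  have hr0 : 0 < r := dist_nonneg.trans_lt hr
  have hsinϑ : 0 < sin ϑ := sin_pos_of_pos_of_lt_pi hϑ.1 (by linarith [hϑ.2, pi_pos])
  have hsin : sin ϑ ≤ sin θ :=
    sin_le_sin_of_le_of_le_pi_div_two (by linarith [hϑ.1, pi_pos]) hθ2 hθ1
  set c := (r + √d / 2) / sin ϑ
  have hc : 0 < c := div_pos (by positivity) hsinϑ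
  have hcsin : c * sin ϑ ≤ c * sin θ := mul_le_mul_of_nonneg_left hsin hc.le
  have hcsinϑ : c * sin ϑ = r + √d / 2 := div_mul_cancel₀ _ hsinϑ.ne'
  have hcR : c + √d / 2 ≤ (r + √d) / sin ϑ := by
    rw [le_div_iff₀ hsinϑ, add_mul, hcsinϑ]
    nlinarith [sin_le_one ϑ, sqrt_nonneg d]
  obtain ⟨z, hz⟩ := exists_dist_latt_le d (x + c • v)
  have hzx : dist (latt d z) x ≤ c + √d / 2 := calc
    _ ≤ dist (latt d z) (x + c • v) + dist (x + c • v) x := dist_triangle _ _ _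
    _ ≤ c + √d / 2 := by
      rw [dist_self_add_left, norm_smul, hv, mul_one, norm_of_nonneg hc.le]; linarith
  have hzy : dist (latt d z) (y + c • v) < c * sin θ := calc
    _ ≤ dist (latt d z) (x + c • v) + dist (x + c • v) (y + c • v) := dist_triangle _ _ _
    _ < c * sin ϑ := by rw [dist_add_right]; linarith
    _ ≤ c * sin θ := hcsin
  refine ⟨z, mem_ball.mpr (by linarith), sub_mem_coneSet_of_dist_lt hv hc (by linarith),
    mem_ball.mpr ?_, sub_mem_coneSet_of_dist_lt hv hc hzy⟩
  linarith [dist_triangle (latt d z) x y]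

/-- Lemma 5.1 (2): a lattice point in the intersection of two shifted cones
with nearby apexes. -/
theorem stmt15 (d : ℕ) (hd : 1 ≤ d) (ϑ : ℝ) (hϑ : ϑ ∈ Set.Ioc 0 (Real.pi / 2))
    (θ : ℝ) (hθ1 : ϑ ≤ θ) (hθ2 : θ ≤ Real.pi / 2) (v : Euc d) (hv : ‖v‖ = 1)
    (x y : Euc d) (r R : ℝ) (hr : dist x y < r)
    (hR : (r + Real.sqrt d) / Real.sin ϑ + r < R) :
    ∃ z : Fin d → ℤ, latt d z ∈ ball x R ∧ latt d z - x ∈ coneSet d v θ ∧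
      latt d z ∈ ball y R ∧ latt d z - y ∈ coneSet d v θ :=
  stmt15_general d ϑ hϑ θ hθ1 hθ2 v hv x y r R hr hR
end
end

section
/- Let d ≥ 1, ϑ ∈ (0, π/2], and let Γ be a ϑ-bounded configuration. Then for every r ≥ 0, every R > (√d + r)/sin(ϑ), and every lattice point x ∈ ℤ^d, there exists an r-R-connected lattice point y ∈ ℤ^d with |y − x| < R. -/
open MeasureTheory Metric
open scoped ENNReal

noncomputable section

/-! Walk a distance `t` from `x` along the axis of `Γ(x)` and round to the nearest lattice
point `y`. A ball of radius `t sin ϑ` around `x + t · axis` lies in `x + Γ(x)`, and `t` can be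
chosen so that this ball contains the `r`-ball around `y` (rounding costs at most `√d / 2`)
while `|y - x| ≤ t + √d / 2 < R`. Then every lattice point `z` with `|z - y| ≤ r` is joined
to `y` by the path `y, x, z`. -/

open Real

lemma mem_coneSet_of_norm_sub_smul_lt {d : ℕ} {a : Euc d} (ha : ‖a‖ = 1) {θ t : ℝ}
    (hθ₀ : 0 < θ) (hθ : θ ≤ π / 2) (ht : 0 < t) {h : Euc d}
    (hh : ‖h - t • a‖ < t * sin θ) : h ∈ coneSet d a θ := by
  set s := sin θ
  set c := cos θ
  set e := h - t • a
  set α := inner ℝ a e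
  have hs : 0 < s := sin_pos_of_pos_of_lt_pi hθ₀ (by linarith [pi_pos])
  have hc : 0 ≤ c := cos_nonneg_of_mem_Icc ⟨by linarith, hθ⟩
  have hα : |α| ≤ ‖e‖ := by simpa [ha] using abs_real_inner_le_norm a e
  have hsplit : h = t • a + e := by simp [e]
  have hinner : inner ℝ a h = t + α := by
    rw [hsplit, inner_add_right, real_inner_smul_right, real_inner_self_eq_norm_sq, ha]; ring
  have hnorm : ‖h‖ ^ 2 = t ^ 2 + 2 * t * α + ‖e‖ ^ 2 := by
    rw [hsplit, norm_add_sq_real, norm_smul, real_inner_smul_left, ha, norm_of_nonneg ht.le]; ring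
  have hpos : 0 < t + α := by nlinarith [abs_le.mp hα, sin_le_one θ]
  -- the squared cone inequality, as a sum of two nonnegative terms (using s² + c² = 1)
  have hid : (t + α) ^ 2 - (c * ‖h‖) ^ 2 = (t * s ^ 2 + α) ^ 2 + c ^ 2 * ((t * s) ^ 2 - ‖e‖ ^ 2) := by
    linear_combination (-c ^ 2) * hnorm - (t ^ 2 * (1 + s ^ 2) + 2 * t * α) * sin_sq_add_cos_sq θ
  have hgap : 0 < (t * s) ^ 2 - ‖e‖ ^ 2 := by nlinarith [norm_nonneg e]
  have key : c * ‖h‖ < t + α := by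
    refine lt_of_pow_lt_pow_left₀ 2 hpos.le (sub_pos.mp ?_)
    rw [hid]
    rcases hc.eq_or_lt with hc0 | hc0
    · have hs1 : s ^ 2 = 1 := by nlinarith [sin_sq_add_cos_sq θ]
      rw [← hc0, hs1, mul_one]; nlinarith [pow_pos hpos 2]
    · positivity
  have h0 : h ≠ 0 := by
    rintro rfl
    simp only [inner_zero_right] at hinner
    simp only [norm_zero, mul_zero] at key
    linarith
  exact ⟨h0, by rwa [lt_div_iff₀ (norm_pos_iff.mpr h0), hinner]⟩

lemma Config.mem_cone_of_norm_sub_smul_lt {d : ℕ} (Γ : Config d) (x : Euc d) {t : ℝ}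
    (ht : 0 < t) {h : Euc d} (hh : ‖h - t • Γ.axis x‖ < t * sin (Γ.angle x)) :
    h ∈ Γ.cone x :=
  Or.inl <| mem_coneSet_of_norm_sub_smul_lt (Γ.axis_norm x) (Γ.angle_mem x).1
    (Γ.angle_mem x).2 ht hh

lemma Config.Bounded.sin_le_sin_angle {d : ℕ} {Γ : Config d} {ϑ : ℝ} (hΓ : Γ.Bounded ϑ)
    (hϑ : -(π / 2) ≤ ϑ) (x : Euc d) : sin ϑ ≤ sin (Γ.angle x) :=
  sin_le_sin_of_le_of_le_pi_div_two hϑ (Γ.angle_mem x).2 (hΓ x)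

lemma norm_latt_round_sub_le {d : ℕ} (c : Euc d) :
    ‖latt d (fun i => round (c i)) - c‖ ≤ √d / 2 := by
  have hcoord (i : Fin d) : ‖(latt d (fun i => round (c i)) - c) i‖ ^ 2 ≤ (1 / 2) ^ 2 := by
    simpa [latt, abs_sub_comm] using pow_le_pow_left₀ (abs_nonneg _) (abs_sub_round (c i)) 2
  calc ‖latt d (fun i => round (c i)) - c‖
      ≤ √(∑ _i : Fin d, (1 / 2 : ℝ) ^ 2) := by
        rw [EuclideanSpace.norm_eq]; exact sqrt_le_sqrt (Finset.sum_le_sum fun i _ => hcoord i)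
    _ = √d / 2 := by simp [div_eq_mul_inv]

lemma rRConnected_of_forall_mem_cone {d : ℕ} {Γ : Config d} {r R : ℝ} {x y : Fin d → ℤ}
    (hr : 0 ≤ r) (hrR : r ≤ R) (hyx : dist (latt d y) (latt d x) ≤ R)
    (hcone : ∀ z, dist (latt d z) (latt d y) ≤ r → latt d z - latt d x ∈ Γ.cone (latt d x)) :
    rRConnected d Γ r R y := by
  intro z hz
  refine ⟨2, fun n => if n = 0 then y else if n = 1 then x else z, rfl, rfl, ?_, ?_⟩
  · intro i hi
    interval_cases i
    · exact Or.inr (hcone y (by simpa using hr))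
    · exact Or.inl (hcone z hz)
  · intro i hi
    interval_cases i
    · simpa using hr.trans hrR
    · simpa [dist_comm] using hyx
    · simpa using hz.trans hrR

lemma exists_pos_add_lt_mul_and_add_lt {q r s R : ℝ} (hq : 0 ≤ q) (hr : 0 ≤ r) (hs : 0 < s)
    (hs1 : s ≤ 1) (hR : (2 * q + r) / s < R) : ∃ t > 0, r + q < t * s ∧ t + q < R := by
  have hlt : (r + q) / s < R - q := by
    have : q ≤ q / s := le_div_self hq hs hs1
    rw [show (2 * q + r) / s = (r + q) / s + q / s by ring] at hR
    linarith
  obtain ⟨t, hLt, htR⟩ := exists_between hlt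
  exact ⟨t, (div_nonneg (by linarith) hs.le).trans_lt hLt, (div_lt_iff₀ hs).mp hLt, by linarith⟩

theorem stmt17_general (d : ℕ) (ϑ : ℝ) (hϑ : ϑ ∈ Set.Ioc 0 (Real.pi / 2))
    (Γ : Config d) (hΓ : Γ.Bounded ϑ) (r R : ℝ) (hr : 0 ≤ r)
    (hR : (Real.sqrt d + r) / Real.sin ϑ < R) (x : Fin d → ℤ) :
    ∃ y : Fin d → ℤ, dist (latt d y) (latt d x) < R ∧ rRConnected d Γ r R y := by
  obtain ⟨hϑ₀, hϑ⟩ := hϑ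
  have hs : 0 < sin ϑ := sin_pos_of_pos_of_lt_pi hϑ₀ (by linarith [pi_pos])
  obtain ⟨t, ht, htr, htR⟩ := exists_pos_add_lt_mul_and_add_lt (q := √d / 2) (by positivity) hr
    hs (sin_le_one ϑ) (by rwa [mul_div_cancel₀ _ two_ne_zero])
  set c := latt d x + t • Γ.axis (latt d x)
  set y : Fin d → ℤ := fun i => round (c i)
  have hyc : ‖latt d y - c‖ ≤ √d / 2 := norm_latt_round_sub_le c
  have hyx : dist (latt d y) (latt d x) < R := by
    have hcx : ‖c - latt d x‖ = t := by
      simp [c, norm_smul, Γ.axis_norm, abs_of_pos ht]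
    rw [dist_eq_norm, ← sub_add_sub_cancel _ c]
    linarith [norm_add_le (latt d y - c) (c - latt d x)]
  have hrR : r ≤ R := by nlinarith [sin_le_one ϑ, sqrt_nonneg d]
  refine ⟨y, hyx, rRConnected_of_forall_mem_cone hr hrR hyx.le fun z hz => ?_⟩
  apply Γ.mem_cone_of_norm_sub_smul_lt (latt d x) ht
  calc ‖latt d z - latt d x - t • Γ.axis (latt d x)‖ = ‖(latt d z - latt d y) + (latt d y - c)‖ := by
        congr 1; simp only [c]; abel
    _ ≤ r + √d / 2 := norm_add_le_of_le (by rwa [← dist_eq_norm]) hyc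
    _ < t * sin ϑ := htr
    _ ≤ t * sin (Γ.angle (latt d x)) := by
        gcongr; exact hΓ.sin_le_sin_angle (by linarith [pi_pos]) _

/-- Lemma 5.4: density of `r`-`R`-connected lattice points. -/
theorem stmt17 (d : ℕ) (hd : 1 ≤ d) (ϑ : ℝ) (hϑ : ϑ ∈ Set.Ioc 0 (Real.pi / 2))
    (Γ : Config d) (hΓ : Γ.Bounded ϑ) (r R : ℝ) (hr : 0 ≤ r)
    (hR : (Real.sqrt d + r) / Real.sin ϑ < R) (x : Fin d → ℤ) :
    ∃ y : Fin d → ℤ, dist (latt d y) (latt d x) < R ∧ rRConnected d Γ r R y :=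
  stmt17_general d ϑ hϑ Γ hΓ r R hr hR x
end
end
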